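/- Assume the block Lipschitz condition holds, let η > 0 satisfy θ(t) ≥ η·t for all t ∈ (0,1), assume if λ > 0 then 0 < r < min{τ, λη/max{L_X, L_Y}} and if β > 0 then 0 < s < βη/L_S, and suppose the minimum of problem (FR) is attained. Then 𝒢_(FB) = 𝒢_(FR) and V_(FB) = V_(FR); moreover, every global minimizer (X,Y,S) of (FB) and of (FR) satisfies property (C1) (𝕀_X = 𝕀_Y, i.e., when λ > 0, X_i ≠ 0 iff Y_i ≠ 0 for each i) and property (C2). -/

import Mathlib

open Matrix Set
open scoped ENNReal

attribute [local instance] Matrix.frobeniusNormedAddCommGroup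

noncomputable section

/-- number of nonzero entries (the ℓ0-norm). -/
def l0 {m n : ℕ} (S : Matrix (Fin m) (Fin n) ℝ) : ℕ :=
  {p : Fin m × Fin n | S p.1 p.2 ≠ 0}.ncard

/-- number of nonzero columns. -/
def nnzc {m d : ℕ} (X : Matrix (Fin m) (Fin d) ℝ) : ℕ :=
  {i : Fin d | ∃ j, X j i ≠ 0}.ncard

/-- Euclidean norm of the `i`-th column. -/
def colNorm {m d : ℕ} (X : Matrix (Fin m) (Fin d) ℝ) (i : Fin d) : ℝ :=
  Real.sqrt (∑ j, (X j i) ^ 2)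

/-- the column index set `𝕀_X`: nonzero columns if `λ > 0`, all columns if `λ = 0`. -/
def colIdx {m d : ℕ} (lam : ℝ) (X : Matrix (Fin m) (Fin d) ℝ) : Set (Fin d) :=
  {i | 0 < lam → ∃ j, X j i ≠ 0}

/-- set of global minimizers of `g` on the feasible set `s`. -/
def globMin {α : Type*} (g : α → ℝ) (s : Set α) : Set α :=
  {a ∈ s | ∀ b ∈ s, g a ≤ g b}

/-- optimal value of the problem of minimizing `g` over `s`. -/
def optVal {α : Type*} (g : α → ℝ) (s : Set α) : ℝ :=
  sInf (g '' s)

/-- property (C1): consistency of the nonzero column index sets. -/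
def propC1 {m n d : ℕ} (lam : ℝ)
    (t : Matrix (Fin m) (Fin d) ℝ × Matrix (Fin n) (Fin d) ℝ × Matrix (Fin m) (Fin n) ℝ) : Prop :=
  colIdx lam t.1 = colIdx lam t.2.1

/-- property (C2) for a triple `(X, Y, S)` with parameters `r, s`. -/
def propC2 {m n d : ℕ} (lam beta r s : ℝ)
    (t : Matrix (Fin m) (Fin d) ℝ × Matrix (Fin n) (Fin d) ℝ × Matrix (Fin m) (Fin n) ℝ) : Prop :=
  (0 < lam → ∀ i, colNorm t.1 i ∉ Set.Ioo 0 r ∧ colNorm t.2.1 i ∉ Set.Ioo 0 r) ∧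
  (0 < beta → ∀ i j, |t.2.2 i j| ∉ Set.Ioo 0 s)

/-!
Since `θ(c/ρ) ≤ 1` for `c ≠ 0` and `θ(0) = 0`, with equality as soon as `c ∉ (0, ρ)`, the
relaxed objective `F_θ^{r,s}` is a minorant of `F` that coincides with it on triples satisfying
(C2). A minimizer of `F_θ^{r,s}` satisfies (C2): zeroing a column of norm `c ∈ (0, r)` (or an
entry with `|S_ij| ∈ (0, s)`) raises the loss by at most `L c` but lowers the penalty by
`λ θ(c/r) ≥ λ η c / r > L c`. Hence the two problems share their minimizers and optimal value.
(C1) holds because zeroing a column of `X` facing a zero column of `Y` leaves `XYᵀ` unchanged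
and strictly lowers the penalty.
-/

section GlobalMinimizers

variable {α : Type*} {g G : α → ℝ} {s : Set α}

theorem optVal_eq_of_mem_globMin {a : α} (ha : a ∈ globMin g s) : optVal g s = g a :=
  IsLeast.csInf_eq ⟨⟨a, ha.1, rfl⟩, by rintro _ ⟨b, hb, rfl⟩; exact ha.2 b hb⟩

theorem globMin_eq_of_le_of_eq_on_globMin (hle : ∀ a ∈ s, g a ≤ G a)
    (heq : ∀ a ∈ globMin g s, G a = g a) (hne : (globMin g s).Nonempty) :
    globMin G s = globMin g s := by
  obtain ⟨a₀, ha₀⟩ := hne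
  ext a
  refine ⟨fun ⟨ha, hmin⟩ => ⟨ha, fun b hb => ?_⟩, fun ha => ⟨ha.1, fun b hb => ?_⟩⟩
  · calc g a ≤ G a := hle a ha
      _ ≤ G a₀ := hmin a₀ ha₀.1
      _ = g a₀ := heq a₀ ha₀
      _ ≤ g b := ha₀.2 b hb
  · calc G a = g a := heq a ha
      _ ≤ g b := ha.2 b hb
      _ ≤ G b := hle b hb

theorem optVal_eq_of_le_of_eq_on_globMin (hle : ∀ a ∈ s, g a ≤ G a)
    (heq : ∀ a ∈ globMin g s, G a = g a) (hne : (globMin g s).Nonempty) :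
    optVal G s = optVal g s := by
  obtain ⟨a₀, ha₀⟩ := hne
  have hG : a₀ ∈ globMin G s := globMin_eq_of_le_of_eq_on_globMin hle heq ⟨a₀, ha₀⟩ ▸ ha₀
  rw [optVal_eq_of_mem_globMin hG, optVal_eq_of_mem_globMin ha₀, heq a₀ ha₀]

end GlobalMinimizers

theorem Fintype.sum_eq_sum_sub_of_eq_except {ι : Type*} [Fintype ι] [DecidableEq ι]
    {g g' : ι → ℝ} {k : ι} (hk : g' k = 0) (h : ∀ i, i ≠ k → g' i = g i) :
    ∑ i, g' i = ∑ i, g i - g k := by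
  rw [← Finset.add_sum_erase _ g' (Finset.mem_univ k),
    ← Finset.add_sum_erase _ g (Finset.mem_univ k), hk,
    Finset.sum_congr rfl fun i hi => h i (Finset.ne_of_mem_erase hi)]
  ring

theorem ncard_setOf_eq_sum_ite {ι : Type*} [Fintype ι] (p : ι → Prop) [DecidablePred p] :
    (({i | p i} : Set ι).ncard : ℝ) = ∑ i, if p i then 1 else 0 := by
  rw [Set.ncard_eq_toFinset_card', Set.toFinset_ofPred, Finset.sum_boole]

section ColumnNorms

variable {m d : ℕ}

theorem colNorm_nonneg (X : Matrix (Fin m) (Fin d) ℝ) (i : Fin d) : 0 ≤ colNorm X i :=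
  Real.sqrt_nonneg _

theorem colNorm_eq_zero_iff {X : Matrix (Fin m) (Fin d) ℝ} {i : Fin d} :
    colNorm X i = 0 ↔ ∀ j, X j i = 0 := by
  rw [colNorm, Real.sqrt_eq_zero (by positivity),
    Finset.sum_eq_zero_iff_of_nonneg fun j _ => sq_nonneg _]
  simp

theorem colNorm_pos_iff {X : Matrix (Fin m) (Fin d) ℝ} {i : Fin d} :
    0 < colNorm X i ↔ ∃ j, X j i ≠ 0 := by
  rw [(colNorm_nonneg X i).lt_iff_ne', Ne, colNorm_eq_zero_iff]
  push Not
  rfl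

theorem colNorm_updateCol_zero (X : Matrix (Fin m) (Fin d) ℝ) (k i : Fin d) :
    colNorm (X.updateCol k 0) i = if i = k then 0 else colNorm X i := by
  split_ifs with h
  · exact colNorm_eq_zero_iff.2 fun j => by simp [h]
  · simp [colNorm, h]

theorem colNorm_sub_updateCol_zero (X : Matrix (Fin m) (Fin d) ℝ) (k : Fin d) :
    colNorm (X - X.updateCol k 0) k = colNorm X k := by
  simp [colNorm]

theorem nnzc_eq_sum (X : Matrix (Fin m) (Fin d) ℝ) :
    (nnzc X : ℝ) = ∑ i, if colNorm X i = 0 then 0 else 1 := by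
  classical
  simp_rw [nnzc, ← colNorm_pos_iff, (colNorm_nonneg X _).lt_iff_ne', ne_eq,
    ncard_setOf_eq_sum_ite, ite_not]

theorem l0_eq_sum {n : ℕ} (S : Matrix (Fin m) (Fin n) ℝ) :
    (l0 S : ℝ) = ∑ i, ∑ j, if S i j = 0 then 0 else 1 := by
  classical
  simp_rw [l0, ncard_setOf_eq_sum_ite, Fintype.sum_prod_type, ite_not]

theorem updateCol_zero_mul_transpose {n : ℕ} (X : Matrix (Fin m) (Fin d) ℝ)
    {Y : Matrix (Fin n) (Fin d) ℝ} {k : Fin d} (hY : ∀ j, Y j k = 0) :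
    X.updateCol k 0 * Yᵀ = X * Yᵀ := by
  ext a b
  simp only [Matrix.mul_apply, Matrix.transpose_apply]
  refine Fintype.sum_congr _ _ fun l => ?_
  by_cases hl : l = k
  · simp [hl, hY]
  · simp [hl]

theorem mul_transpose_updateCol_zero {n : ℕ} {X : Matrix (Fin m) (Fin d) ℝ}
    (Y : Matrix (Fin n) (Fin d) ℝ) {k : Fin d} (hX : ∀ j, X j k = 0) :
    X * (Y.updateCol k 0)ᵀ = X * Yᵀ := by
  rw [← Matrix.transpose_transpose (X * _), Matrix.transpose_mul, Matrix.transpose_transpose,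
    updateCol_zero_mul_transpose Y hX, Matrix.transpose_mul, Matrix.transpose_transpose]

end ColumnNorms

section Relaxation

variable {θ : ℝ → ℝ} {η lam L r c : ℝ}

theorem theta_div_le_ite (hθ0 : θ 0 = 0) (hθ01 : ∀ t, 0 < t → t < 1 → θ t ≤ 1)
    (hθ1 : ∀ t, 1 ≤ t → θ t = 1) (hr : 0 < r) (hc : 0 ≤ c) :
    θ (c / r) ≤ if c = 0 then 0 else 1 := by
  rcases hc.eq_or_lt with rfl | hc
  · simp [hθ0]
  · rw [if_neg hc.ne']
    rcases lt_or_ge (c / r) 1 with h | h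
    · exact hθ01 _ (div_pos hc hr) h
    · exact (hθ1 _ h).le

theorem theta_div_eq_ite (hθ0 : θ 0 = 0) (hθ1 : ∀ t, 1 ≤ t → θ t = 1) (hr : 0 < r)
    (hc : 0 ≤ c) (hcr : c ∉ Set.Ioo 0 r) : θ (c / r) = if c = 0 then 0 else 1 := by
  rcases hc.eq_or_lt with rfl | hc
  · simp [hθ0]
  · rw [if_neg hc.ne', hθ1 _ ((one_le_div hr).2 (not_lt.1 fun h => hcr ⟨hc, h⟩))]

theorem theta_div_pos (hη : 0 < η) (hθη : ∀ t, 0 < t → t < 1 → η * t ≤ θ t)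
    (hθ1 : ∀ t, 1 ≤ t → θ t = 1) (hr : 0 < r) (hc : 0 < c) : 0 < θ (c / r) := by
  rcases lt_or_ge (c / r) 1 with h | h
  · exact (mul_pos hη (div_pos hc hr)).trans_le (hθη _ (div_pos hc hr) h)
  · rw [hθ1 _ h]
    exact one_pos

theorem mul_lt_mul_theta_div (hθη : ∀ t, 0 < t → t < 1 → η * t ≤ θ t) (hlam : 0 ≤ lam)
    (hr : 0 < r) (hL : L * r < lam * η) (hc : c ∈ Set.Ioo 0 r) : L * c < lam * θ (c / r) := by
  have hcr : 0 < c / r := div_pos hc.1 hr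
  calc L * c = L * r * (c / r) := by field_simp
    _ < lam * η * (c / r) := mul_lt_mul_of_pos_right hL hcr
    _ ≤ lam * θ (c / r) := by
      rw [mul_assoc]
      exact mul_le_mul_of_nonneg_left (hθη _ hcr ((div_lt_one hr).2 hc.2)) hlam

end Relaxation

section Penalties

variable {m n d : ℕ} {θ : ℝ → ℝ} {r s : ℝ}

/-- The relaxed column count `Θ^r`. -/
def colPenalty (θ : ℝ → ℝ) (r : ℝ) (X : Matrix (Fin m) (Fin d) ℝ) : ℝ :=
  ∑ i, θ (colNorm X i / r)

/-- The relaxed entry count `Θ̃^s`. -/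
def entryPenalty (θ : ℝ → ℝ) (s : ℝ) (S : Matrix (Fin m) (Fin n) ℝ) : ℝ :=
  ∑ i, ∑ j, θ (|S i j| / s)

theorem colPenalty_le_nnzc (hθ0 : θ 0 = 0) (hθ01 : ∀ t, 0 < t → t < 1 → θ t ≤ 1)
    (hθ1 : ∀ t, 1 ≤ t → θ t = 1) (hr : 0 < r) (X : Matrix (Fin m) (Fin d) ℝ) :
    colPenalty θ r X ≤ nnzc X := by
  rw [nnzc_eq_sum]
  exact Finset.sum_le_sum fun i _ => theta_div_le_ite hθ0 hθ01 hθ1 hr (colNorm_nonneg X i)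

theorem colPenalty_eq_nnzc (hθ0 : θ 0 = 0) (hθ1 : ∀ t, 1 ≤ t → θ t = 1) (hr : 0 < r)
    {X : Matrix (Fin m) (Fin d) ℝ} (hX : ∀ i, colNorm X i ∉ Set.Ioo 0 r) :
    colPenalty θ r X = nnzc X := by
  rw [nnzc_eq_sum]
  exact Fintype.sum_congr _ _ fun i => theta_div_eq_ite hθ0 hθ1 hr (colNorm_nonneg X i) (hX i)

theorem entryPenalty_le_l0 (hθ0 : θ 0 = 0) (hθ01 : ∀ t, 0 < t → t < 1 → θ t ≤ 1)
    (hθ1 : ∀ t, 1 ≤ t → θ t = 1) (hs : 0 < s) (S : Matrix (Fin m) (Fin n) ℝ) :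
    entryPenalty θ s S ≤ l0 S := by
  rw [l0_eq_sum]
  refine Finset.sum_le_sum fun i _ => Finset.sum_le_sum fun j _ => ?_
  simpa only [abs_eq_zero] using theta_div_le_ite hθ0 hθ01 hθ1 hs (abs_nonneg (S i j))

theorem entryPenalty_eq_l0 (hθ0 : θ 0 = 0) (hθ1 : ∀ t, 1 ≤ t → θ t = 1) (hs : 0 < s)
    {S : Matrix (Fin m) (Fin n) ℝ} (hS : ∀ i j, |S i j| ∉ Set.Ioo 0 s) :
    entryPenalty θ s S = l0 S := by
  rw [l0_eq_sum]
  refine Fintype.sum_congr _ _ fun i => Fintype.sum_congr _ _ fun j => ?_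
  simpa only [abs_eq_zero] using theta_div_eq_ite hθ0 hθ1 hs (abs_nonneg (S i j)) (hS i j)

theorem colPenalty_updateCol_zero (hθ0 : θ 0 = 0) (X : Matrix (Fin m) (Fin d) ℝ) (k : Fin d) :
    colPenalty θ r (X.updateCol k 0) = colPenalty θ r X - θ (colNorm X k / r) :=
  Fintype.sum_eq_sum_sub_of_eq_except (by simp [colNorm_updateCol_zero, hθ0])
    fun i hi => by simp [colNorm_updateCol_zero, hi]

theorem entryPenalty_sub_single (hθ0 : θ 0 = 0) (S : Matrix (Fin m) (Fin n) ℝ)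
    (a : Fin m) (b : Fin n) :
    entryPenalty θ s (S - Matrix.single a b (S a b)) = entryPenalty θ s S - θ (|S a b| / s) := by
  simp only [entryPenalty, ← Fintype.sum_prod_type']
  refine Fintype.sum_eq_sum_sub_of_eq_except (k := (a, b)) (by simp [hθ0]) ?_
  rintro ⟨i, j⟩ hij
  rw [Matrix.sub_apply, Matrix.single_apply_of_ne _ _ _ _ _ fun h => hij (by rw [h.1, h.2]),
    sub_zero]

end Penalties

abbrev Triple (m n d : ℕ) : Type :=
  Matrix (Fin m) (Fin d) ℝ × Matrix (Fin n) (Fin d) ℝ × Matrix (Fin m) (Fin n) ℝ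

section Objectives

variable {m n d : ℕ} (f : Matrix (Fin m) (Fin n) ℝ → Matrix (Fin m) (Fin n) ℝ → ℝ)

/-- The objective `F` of (FB). -/
def sparseObj (lam beta : ℝ) (t : Triple m n d) : ℝ :=
  f (t.1 * t.2.1ᵀ) t.2.2 + lam * ((nnzc t.1 : ℝ) + (nnzc t.2.1 : ℝ)) + beta * (l0 t.2.2 : ℝ)

/-- The objective `F_θ^{r,s}` of (FR). -/
def relaxedObj (lam beta : ℝ) (θ : ℝ → ℝ) (r s : ℝ) (t : Triple m n d) : ℝ :=
  f (t.1 * t.2.1ᵀ) t.2.2 + lam * (colPenalty θ r t.1 + colPenalty θ r t.2.1) +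
    beta * entryPenalty θ s t.2.2

variable {f} {lam beta : ℝ} {θ : ℝ → ℝ} {r s : ℝ}

theorem relaxedObj_le_sparseObj (hθ0 : θ 0 = 0) (hθ01 : ∀ t, 0 < t → t < 1 → θ t ≤ 1)
    (hθ1 : ∀ t, 1 ≤ t → θ t = 1) (hlam : 0 ≤ lam) (hbeta : 0 ≤ beta)
    (hr : 0 < lam → 0 < r) (hs : 0 < beta → 0 < s) (t : Triple m n d) :
    relaxedObj f lam beta θ r s t ≤ sparseObj f lam beta t := by
  have hcols : lam * (colPenalty θ r t.1 + colPenalty θ r t.2.1) ≤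
      lam * ((nnzc t.1 : ℝ) + (nnzc t.2.1 : ℝ)) := by
    rcases hlam.eq_or_lt with rfl | hl
    · simp
    · exact mul_le_mul_of_nonneg_left (add_le_add (colPenalty_le_nnzc hθ0 hθ01 hθ1 (hr hl) _)
        (colPenalty_le_nnzc hθ0 hθ01 hθ1 (hr hl) _)) hlam
  have hentries : beta * entryPenalty θ s t.2.2 ≤ beta * (l0 t.2.2 : ℝ) := by
    rcases hbeta.eq_or_lt with rfl | hb
    · simp
    · exact mul_le_mul_of_nonneg_left (entryPenalty_le_l0 hθ0 hθ01 hθ1 (hs hb) _) hbeta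
  unfold relaxedObj sparseObj
  linarith

theorem relaxedObj_eq_sparseObj (hθ0 : θ 0 = 0) (hθ1 : ∀ t, 1 ≤ t → θ t = 1)
    (hlam : 0 ≤ lam) (hbeta : 0 ≤ beta) (hr : 0 < lam → 0 < r) (hs : 0 < beta → 0 < s)
    {t : Triple m n d} (ht : propC2 lam beta r s t) :
    relaxedObj f lam beta θ r s t = sparseObj f lam beta t := by
  have hcols : lam * (colPenalty θ r t.1 + colPenalty θ r t.2.1) =
      lam * ((nnzc t.1 : ℝ) + (nnzc t.2.1 : ℝ)) := by
    rcases hlam.eq_or_lt with rfl | hl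
    · simp
    · rw [colPenalty_eq_nnzc hθ0 hθ1 (hr hl) fun i => (ht.1 hl i).1,
        colPenalty_eq_nnzc hθ0 hθ1 (hr hl) fun i => (ht.1 hl i).2]
  have hentries : beta * entryPenalty θ s t.2.2 = beta * (l0 t.2.2 : ℝ) := by
    rcases hbeta.eq_or_lt with rfl | hb
    · simp
    · rw [entryPenalty_eq_l0 hθ0 hθ1 (hs hb) (ht.2 hb)]
  rw [relaxedObj, sparseObj, hcols, hentries]

theorem relaxedObj_updateCol_left (hθ0 : θ 0 = 0) (X : Matrix (Fin m) (Fin d) ℝ)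
    (Y : Matrix (Fin n) (Fin d) ℝ) (S : Matrix (Fin m) (Fin n) ℝ) (k : Fin d) :
    relaxedObj f lam beta θ r s (X.updateCol k 0, Y, S) = relaxedObj f lam beta θ r s (X, Y, S) +
      (f (X.updateCol k 0 * Yᵀ) S - f (X * Yᵀ) S) - lam * θ (colNorm X k / r) := by
  simp only [relaxedObj, colPenalty_updateCol_zero hθ0]
  ring

theorem relaxedObj_updateCol_right (hθ0 : θ 0 = 0) (X : Matrix (Fin m) (Fin d) ℝ)
    (Y : Matrix (Fin n) (Fin d) ℝ) (S : Matrix (Fin m) (Fin n) ℝ) (k : Fin d) :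
    relaxedObj f lam beta θ r s (X, Y.updateCol k 0, S) = relaxedObj f lam beta θ r s (X, Y, S) +
      (f (X * (Y.updateCol k 0)ᵀ) S - f (X * Yᵀ) S) - lam * θ (colNorm Y k / r) := by
  simp only [relaxedObj, colPenalty_updateCol_zero hθ0]
  ring

theorem relaxedObj_sub_single (hθ0 : θ 0 = 0) (X : Matrix (Fin m) (Fin d) ℝ)
    (Y : Matrix (Fin n) (Fin d) ℝ) (S : Matrix (Fin m) (Fin n) ℝ) (a : Fin m) (b : Fin n) :
    relaxedObj f lam beta θ r s (X, Y, S - Matrix.single a b (S a b)) =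
      relaxedObj f lam beta θ r s (X, Y, S) +
      (f (X * Yᵀ) (S - Matrix.single a b (S a b)) - f (X * Yᵀ) S) - beta * θ (|S a b| / s) := by
  simp only [relaxedObj, entryPenalty_sub_single hθ0]
  ring

end Objectives

section Feasibility

variable {m n d : ℕ}

/-- The constraint set `𝓑^X` (or `𝓑^Y`). -/
def colBall (τ : ℝ≥0∞) : Set (Matrix (Fin m) (Fin d) ℝ) :=
  {X | ∀ i, ENNReal.ofReal (colNorm X i) ≤ τ}

/-- The box `𝓑^S`. -/
def entryBox (κ1 κ2 : Fin m → Fin n → EReal) : Set (Matrix (Fin m) (Fin n) ℝ) :=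
  {S | ∀ i j, κ1 i j ≤ (S i j : EReal) ∧ (S i j : EReal) ≤ κ2 i j}

/-- The feasible set `𝓑` of both problems. -/
def feasibleSet (τ : ℝ≥0∞) (κ1 κ2 : Fin m → Fin n → EReal) : Set (Triple m n d) :=
  {t | t.1 ∈ colBall τ ∧ t.2.1 ∈ colBall τ ∧ t.2.2 ∈ entryBox κ1 κ2}

variable {τ : ℝ≥0∞} {κ1 κ2 : Fin m → Fin n → EReal}

theorem updateCol_zero_mem_colBall {X : Matrix (Fin m) (Fin d) ℝ} (hX : X ∈ colBall τ)
    (k : Fin d) : X.updateCol k 0 ∈ colBall τ := fun i => by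
  rw [colNorm_updateCol_zero]
  split_ifs
  · simp
  · exact hX i

theorem sub_single_mem_entryBox (hκ1 : ∀ i j, κ1 i j ≤ 0) (hκ2 : ∀ i j, 0 ≤ κ2 i j)
    {S : Matrix (Fin m) (Fin n) ℝ} (hS : S ∈ entryBox κ1 κ2) (a : Fin m) (b : Fin n) :
    S - Matrix.single a b (S a b) ∈ entryBox κ1 κ2 := fun i j => by
  by_cases h : a = i ∧ b = j
  · obtain ⟨rfl, rfl⟩ := h
    simpa using ⟨hκ1 a b, hκ2 a b⟩
  · rw [Matrix.sub_apply, Matrix.single_apply_of_ne _ _ _ _ _ h, sub_zero]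
    exact hS i j

theorem updateCol_left_mem_feasibleSet (X : Matrix (Fin m) (Fin d) ℝ)
    (Y : Matrix (Fin n) (Fin d) ℝ) (S : Matrix (Fin m) (Fin n) ℝ) (k : Fin d)
    (h : (X, Y, S) ∈ feasibleSet τ κ1 κ2) : (X.updateCol k 0, Y, S) ∈ feasibleSet τ κ1 κ2 :=
  ⟨updateCol_zero_mem_colBall h.1 k, h.2⟩

theorem updateCol_right_mem_feasibleSet (X : Matrix (Fin m) (Fin d) ℝ)
    (Y : Matrix (Fin n) (Fin d) ℝ) (S : Matrix (Fin m) (Fin n) ℝ) (k : Fin d)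
    (h : (X, Y, S) ∈ feasibleSet τ κ1 κ2) : (X, Y.updateCol k 0, S) ∈ feasibleSet τ κ1 κ2 :=
  ⟨h.1, updateCol_zero_mem_colBall h.2.1 k, h.2.2⟩

theorem sub_single_mem_feasibleSet (hκ1 : ∀ i j, κ1 i j ≤ 0) (hκ2 : ∀ i j, 0 ≤ κ2 i j)
    (X : Matrix (Fin m) (Fin d) ℝ) (Y : Matrix (Fin n) (Fin d) ℝ) (S : Matrix (Fin m) (Fin n) ℝ)
    (a : Fin m) (b : Fin n) (h : (X, Y, S) ∈ feasibleSet τ κ1 κ2) :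
    (X, Y, S - Matrix.single a b (S a b)) ∈ feasibleSet τ κ1 κ2 :=
  ⟨h.1, h.2.1, sub_single_mem_entryBox hκ1 hκ2 h.2.2 a b⟩

end Feasibility

section Perturbation

variable {m n d : ℕ} {f : Matrix (Fin m) (Fin n) ℝ → Matrix (Fin m) (Fin n) ℝ → ℝ}

def BlockLipschitzLeft (f : Matrix (Fin m) (Fin n) ℝ → Matrix (Fin m) (Fin n) ℝ → ℝ)
    (K : Set (Triple m n d)) (L : ℝ) : Prop :=
  ∀ (X X' : Matrix (Fin m) (Fin d) ℝ) (Y : Matrix (Fin n) (Fin d) ℝ)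
    (S : Matrix (Fin m) (Fin n) ℝ) (k : Fin d), (X, Y, S) ∈ K → (X', Y, S) ∈ K →
    (∀ i, i ≠ k → ∀ j, X j i = X' j i) → |f (X * Yᵀ) S - f (X' * Yᵀ) S| ≤ L * colNorm (X - X') k

def BlockLipschitzRight (f : Matrix (Fin m) (Fin n) ℝ → Matrix (Fin m) (Fin n) ℝ → ℝ)
    (K : Set (Triple m n d)) (L : ℝ) : Prop :=
  ∀ (X : Matrix (Fin m) (Fin d) ℝ) (Y Y' : Matrix (Fin n) (Fin d) ℝ)
    (S : Matrix (Fin m) (Fin n) ℝ) (k : Fin d), (X, Y, S) ∈ K → (X, Y', S) ∈ K →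
    (∀ i, i ≠ k → ∀ j, Y j i = Y' j i) → |f (X * Yᵀ) S - f (X * Y'ᵀ) S| ≤ L * colNorm (Y - Y') k

def BlockLipschitzEntry (f : Matrix (Fin m) (Fin n) ℝ → Matrix (Fin m) (Fin n) ℝ → ℝ)
    (K : Set (Triple m n d)) (L : ℝ) : Prop :=
  ∀ (X : Matrix (Fin m) (Fin d) ℝ) (Y : Matrix (Fin n) (Fin d) ℝ)
    (S S' : Matrix (Fin m) (Fin n) ℝ) (i : Fin m) (j : Fin n),
    (X, Y, S) ∈ K → (X, Y, S') ∈ K →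
    (∀ i' j', (i', j') ≠ (i, j) → S i' j' = S' i' j') →
    |f (X * Yᵀ) S - f (X * Yᵀ) S'| ≤ L * |S i j - S' i j|

variable {K : Set (Triple m n d)} {lam beta η L r s : ℝ} {θ : ℝ → ℝ}
  {X : Matrix (Fin m) (Fin d) ℝ} {Y : Matrix (Fin n) (Fin d) ℝ} {S : Matrix (Fin m) (Fin n) ℝ}

theorem colNorm_left_notMem_Ioo_of_mem_globMin (hθ0 : θ 0 = 0)
    (hθη : ∀ t, 0 < t → t < 1 → η * t ≤ θ t) (hlam : 0 ≤ lam) (hr : 0 < r)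
    (hL : L * r < lam * η) (hLip : BlockLipschitzLeft f K L)
    (hK : ∀ X Y S k, (X, Y, S) ∈ K → (X.updateCol k 0, Y, S) ∈ K)
    (ht : (X, Y, S) ∈ globMin (relaxedObj f lam beta θ r s) K) (k : Fin d) :
    colNorm X k ∉ Set.Ioo 0 r := by
  intro hc
  have hK' := hK X Y S k ht.1
  have hf := hLip X (X.updateCol k 0) Y S k ht.1 hK' fun i hi j => by simp [hi]
  rw [colNorm_sub_updateCol_zero, abs_sub_comm] at hf
  have hmin := ht.2 _ hK'
  rw [relaxedObj_updateCol_left hθ0] at hmin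
  linarith [le_abs_self (f (X.updateCol k 0 * Yᵀ) S - f (X * Yᵀ) S),
    mul_lt_mul_theta_div hθη hlam hr hL hc]

theorem colNorm_right_notMem_Ioo_of_mem_globMin (hθ0 : θ 0 = 0)
    (hθη : ∀ t, 0 < t → t < 1 → η * t ≤ θ t) (hlam : 0 ≤ lam) (hr : 0 < r)
    (hL : L * r < lam * η) (hLip : BlockLipschitzRight f K L)
    (hK : ∀ X Y S k, (X, Y, S) ∈ K → (X, Y.updateCol k 0, S) ∈ K)
    (ht : (X, Y, S) ∈ globMin (relaxedObj f lam beta θ r s) K) (k : Fin d) :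
    colNorm Y k ∉ Set.Ioo 0 r := by
  intro hc
  have hK' := hK X Y S k ht.1
  have hf := hLip X Y (Y.updateCol k 0) S k ht.1 hK' fun i hi j => by simp [hi]
  rw [colNorm_sub_updateCol_zero, abs_sub_comm] at hf
  have hmin := ht.2 _ hK'
  rw [relaxedObj_updateCol_right hθ0] at hmin
  linarith [le_abs_self (f (X * (Y.updateCol k 0)ᵀ) S - f (X * Yᵀ) S),
    mul_lt_mul_theta_div hθη hlam hr hL hc]

theorem abs_notMem_Ioo_of_mem_globMin (hθ0 : θ 0 = 0)
    (hθη : ∀ t, 0 < t → t < 1 → η * t ≤ θ t) (hbeta : 0 ≤ beta) (hs : 0 < s)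
    (hL : L * s < beta * η) (hLip : BlockLipschitzEntry f K L)
    (hK : ∀ X Y S a b, (X, Y, S) ∈ K → (X, Y, S - Matrix.single a b (S a b)) ∈ K)
    (ht : (X, Y, S) ∈ globMin (relaxedObj f lam beta θ r s) K) (a : Fin m) (b : Fin n) :
    |S a b| ∉ Set.Ioo 0 s := by
  intro hc
  have hK' := hK X Y S a b ht.1
  have hf := hLip X Y S _ a b ht.1 hK' fun i j hij => by
    rw [Matrix.sub_apply, Matrix.single_apply_of_ne _ _ _ _ _ fun h => hij (by rw [h.1, h.2]),
      sub_zero]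
  rw [Matrix.sub_apply, Matrix.single_apply_same, sub_sub_cancel, abs_sub_comm] at hf
  have hmin := ht.2 _ hK'
  rw [relaxedObj_sub_single hθ0] at hmin
  linarith [le_abs_self (f (X * Yᵀ) (S - Matrix.single a b (S a b)) - f (X * Yᵀ) S),
    mul_lt_mul_theta_div hθη hbeta hs hL hc]

theorem exists_right_ne_zero_of_mem_globMin (hθ0 : θ 0 = 0) (hη : 0 < η)
    (hθη : ∀ t, 0 < t → t < 1 → η * t ≤ θ t) (hθ1 : ∀ t, 1 ≤ t → θ t = 1) (hlam : 0 < lam)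
    (hr : 0 < r) (hK : ∀ X Y S k, (X, Y, S) ∈ K → (X.updateCol k 0, Y, S) ∈ K)
    (ht : (X, Y, S) ∈ globMin (relaxedObj f lam beta θ r s) K) {k : Fin d}
    (hX : ∃ j, X j k ≠ 0) : ∃ j, Y j k ≠ 0 := by
  by_contra hY
  push Not at hY
  have hmin := ht.2 _ (hK X Y S k ht.1)
  rw [relaxedObj_updateCol_left hθ0, updateCol_zero_mul_transpose X hY] at hmin
  linarith [mul_pos hlam (theta_div_pos hη hθη hθ1 hr (colNorm_pos_iff.2 hX))]

theorem exists_left_ne_zero_of_mem_globMin (hθ0 : θ 0 = 0) (hη : 0 < η)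
    (hθη : ∀ t, 0 < t → t < 1 → η * t ≤ θ t) (hθ1 : ∀ t, 1 ≤ t → θ t = 1) (hlam : 0 < lam)
    (hr : 0 < r) (hK : ∀ X Y S k, (X, Y, S) ∈ K → (X, Y.updateCol k 0, S) ∈ K)
    (ht : (X, Y, S) ∈ globMin (relaxedObj f lam beta θ r s) K) {k : Fin d}
    (hY : ∃ j, Y j k ≠ 0) : ∃ j, X j k ≠ 0 := by
  by_contra hX
  push Not at hX
  have hmin := ht.2 _ (hK X Y S k ht.1)
  rw [relaxedObj_updateCol_right hθ0, mul_transpose_updateCol_zero Y hX] at hmin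
  linarith [mul_pos hlam (theta_div_pos hη hθη hθ1 hr (colNorm_pos_iff.2 hY))]

end Perturbation

section MinimizerProperties

variable {m n d : ℕ} {f : Matrix (Fin m) (Fin n) ℝ → Matrix (Fin m) (Fin n) ℝ → ℝ}
  {K : Set (Triple m n d)} {lam beta η r s : ℝ} {θ : ℝ → ℝ} {t : Triple m n d}

theorem propC2_of_mem_globMin {LX LY LS : ℝ} (hθ0 : θ 0 = 0)
    (hθη : ∀ t, 0 < t → t < 1 → η * t ≤ θ t) (hlam : 0 ≤ lam) (hbeta : 0 ≤ beta)
    (hr : 0 < lam → 0 < r) (hs : 0 < beta → 0 < s)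
    (hrL : 0 < lam → max LX LY * r < lam * η) (hsL : 0 < beta → LS * s < beta * η)
    (hLipX : 0 < lam → BlockLipschitzLeft f K LX) (hLipY : 0 < lam → BlockLipschitzRight f K LY)
    (hLipS : 0 < beta → BlockLipschitzEntry f K LS)
    (hKX : ∀ X Y S k, (X, Y, S) ∈ K → (X.updateCol k 0, Y, S) ∈ K)
    (hKY : ∀ X Y S k, (X, Y, S) ∈ K → (X, Y.updateCol k 0, S) ∈ K)
    (hKS : ∀ X Y S a b, (X, Y, S) ∈ K → (X, Y, S - Matrix.single a b (S a b)) ∈ K)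
    (ht : t ∈ globMin (relaxedObj f lam beta θ r s) K) : propC2 lam beta r s t := by
  obtain ⟨X, Y, S⟩ := t
  refine ⟨fun hl i => ⟨?_, ?_⟩, fun hb a b =>
    abs_notMem_Ioo_of_mem_globMin hθ0 hθη hbeta (hs hb) (hsL hb) (hLipS hb) hKS ht a b⟩
  · have hL : LX * r < lam * η :=
      (mul_le_mul_of_nonneg_right (le_max_left _ _) (hr hl).le).trans_lt (hrL hl)
    exact colNorm_left_notMem_Ioo_of_mem_globMin hθ0 hθη hlam (hr hl) hL (hLipX hl) hKX ht i
  · have hL : LY * r < lam * η :=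
      (mul_le_mul_of_nonneg_right (le_max_right _ _) (hr hl).le).trans_lt (hrL hl)
    exact colNorm_right_notMem_Ioo_of_mem_globMin hθ0 hθη hlam (hr hl) hL (hLipY hl) hKY ht i

theorem propC1_of_mem_globMin (hθ0 : θ 0 = 0) (hη : 0 < η)
    (hθη : ∀ t, 0 < t → t < 1 → η * t ≤ θ t) (hθ1 : ∀ t, 1 ≤ t → θ t = 1)
    (hr : 0 < lam → 0 < r)
    (hKX : ∀ X Y S k, (X, Y, S) ∈ K → (X.updateCol k 0, Y, S) ∈ K)
    (hKY : ∀ X Y S k, (X, Y, S) ∈ K → (X, Y.updateCol k 0, S) ∈ K)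
    (ht : t ∈ globMin (relaxedObj f lam beta θ r s) K) : propC1 lam t := by
  obtain ⟨X, Y, S⟩ := t
  ext k
  exact ⟨fun hX hl => exists_right_ne_zero_of_mem_globMin hθ0 hη hθη hθ1 hl (hr hl) hKX ht (hX hl),
    fun hY hl => exists_left_ne_zero_of_mem_globMin hθ0 hη hθη hθ1 hl (hr hl) hKY ht (hY hl)⟩

end MinimizerProperties

theorem stmt9_general (m n d : ℕ)
    (lam beta : ℝ) (hlam : 0 ≤ lam) (hbeta : 0 ≤ beta)
    (f : Matrix (Fin m) (Fin n) ℝ → Matrix (Fin m) (Fin n) ℝ → ℝ)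
    (κ1 κ2 : Fin m → Fin n → EReal)
    (hκ1 : ∀ i j, κ1 i j ≤ 0) (hκ2 : ∀ i j, 0 ≤ κ2 i j)
    (BS : Set (Matrix (Fin m) (Fin n) ℝ))
    (hBS : BS = {S | ∀ i j, κ1 i j ≤ (S i j : EReal) ∧ (S i j : EReal) ≤ κ2 i j})
    (τ : ℝ≥0∞)
    (BX : Set (Matrix (Fin m) (Fin d) ℝ))
    (hBX : BX = {X | ∀ i, ENNReal.ofReal (colNorm X i) ≤ τ})
    (BY : Set (Matrix (Fin n) (Fin d) ℝ))
    (hBY : BY = {Y | ∀ i, ENNReal.ofReal (colNorm Y i) ≤ τ})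
    (feasFB : Set (Matrix (Fin m) (Fin d) ℝ × Matrix (Fin n) (Fin d) ℝ × Matrix (Fin m) (Fin n) ℝ))
    (hfeasFB : feasFB = {t | t.1 ∈ BX ∧ t.2.1 ∈ BY ∧ t.2.2 ∈ BS})
    (FF : Matrix (Fin m) (Fin d) ℝ × Matrix (Fin n) (Fin d) ℝ × Matrix (Fin m) (Fin n) ℝ → ℝ)
    (hFF : FF = fun t => f (t.1 * t.2.1ᵀ) t.2.2 +
      lam * ((nnzc t.1 : ℝ) + (nnzc t.2.1 : ℝ)) + beta * (l0 t.2.2 : ℝ))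
    -- the relaxation function θ
    (θ : ℝ → ℝ) (hθ0 : θ 0 = 0)
    (hθ01 : ∀ t, 0 < t → t < 1 → θ t ≤ 1) (hθ1 : ∀ t, 1 ≤ t → θ t = 1)
    -- block Lipschitz condition on f over 𝓑
    (LX LY LS : ℝ) (hLX : 0 < LX) (hLS : 0 < LS)
    (hLipX : 0 < lam → ∀ (X X' : Matrix (Fin m) (Fin d) ℝ) (Y : Matrix (Fin n) (Fin d) ℝ)
      (S : Matrix (Fin m) (Fin n) ℝ) (k : Fin d), (X, Y, S) ∈ feasFB → (X', Y, S) ∈ feasFB →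
      (∀ i, i ≠ k → ∀ j, X j i = X' j i) →
      |f (X * Yᵀ) S - f (X' * Yᵀ) S| ≤ LX * colNorm (X - X') k)
    (hLipY : 0 < lam → ∀ (X : Matrix (Fin m) (Fin d) ℝ) (Y Y' : Matrix (Fin n) (Fin d) ℝ)
      (S : Matrix (Fin m) (Fin n) ℝ) (k : Fin d), (X, Y, S) ∈ feasFB → (X, Y', S) ∈ feasFB →
      (∀ i, i ≠ k → ∀ j, Y j i = Y' j i) →
      |f (X * Yᵀ) S - f (X * Y'ᵀ) S| ≤ LY * colNorm (Y - Y') k)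
    (hLipS : 0 < beta → ∀ (X : Matrix (Fin m) (Fin d) ℝ) (Y : Matrix (Fin n) (Fin d) ℝ)
      (S S' : Matrix (Fin m) (Fin n) ℝ) (i : Fin m) (j : Fin n),
      (X, Y, S) ∈ feasFB → (X, Y, S') ∈ feasFB →
      (∀ i' j', (i', j') ≠ (i, j) → S i' j' = S' i' j') →
      |f (X * Yᵀ) S - f (X * Yᵀ) S'| ≤ LS * |S i j - S' i j|)
    -- η > 0 with θ(t) ≥ η·t on (0,1)
    (η : ℝ) (hη : 0 < η) (hθη : ∀ t, 0 < t → t < 1 → η * t ≤ θ t)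
    -- parameters r, s and the bounds on them
    (r s : ℝ)
    (hrpos : 0 < lam → 0 < r)
    (hrb : 0 < lam → r < lam * η / max LX LY)
    (hspos : 0 < beta → 0 < s)
    (hsb : 0 < beta → s < beta * η / LS)
    -- the relaxed objective
    (FR : Matrix (Fin m) (Fin d) ℝ × Matrix (Fin n) (Fin d) ℝ × Matrix (Fin m) (Fin n) ℝ → ℝ)
    (hFR : FR = fun t => f (t.1 * t.2.1ᵀ) t.2.2 +
      lam * ((∑ i, θ (colNorm t.1 i / r)) + ∑ i, θ (colNorm t.2.1 i / r)) +
      beta * ∑ i, ∑ j, θ (|t.2.2 i j| / s))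
    -- the minimum of (FR) is attained
    (hne : (globMin FR feasFB).Nonempty) :
    globMin FF feasFB = globMin FR feasFB ∧ optVal FF feasFB = optVal FR feasFB ∧
    (∀ t ∈ globMin FF feasFB, propC1 lam t ∧ propC2 lam beta r s t) ∧
    (∀ t ∈ globMin FR feasFB, propC1 lam t ∧ propC2 lam beta r s t) := by
  subst hBX hBY hBS
  obtain rfl : feasFB = feasibleSet τ κ1 κ2 := hfeasFB
  obtain rfl : FF = sparseObj f lam beta := hFF
  obtain rfl : FR = relaxedObj f lam beta θ r s := hFR
  have hrL : 0 < lam → max LX LY * r < lam * η := fun hl =>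
    (lt_div_iff₀' (lt_max_of_lt_left hLX)).1 (hrb hl)
  have hsL : 0 < beta → LS * s < beta * η := fun hb => (lt_div_iff₀' hLS).1 (hsb hb)
  have hC2 : ∀ t ∈ globMin (relaxedObj f lam beta θ r s) (feasibleSet τ κ1 κ2),
      propC2 lam beta r s t := fun _ =>
    propC2_of_mem_globMin hθ0 hθη hlam hbeta hrpos hspos hrL hsL hLipX hLipY hLipS
      updateCol_left_mem_feasibleSet updateCol_right_mem_feasibleSet
      (sub_single_mem_feasibleSet hκ1 hκ2)
  have hC : ∀ t ∈ globMin (relaxedObj f lam beta θ r s) (feasibleSet τ κ1 κ2),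
      propC1 lam t ∧ propC2 lam beta r s t := fun t ht =>
    ⟨propC1_of_mem_globMin hθ0 hη hθη hθ1 hrpos updateCol_left_mem_feasibleSet
      updateCol_right_mem_feasibleSet ht, hC2 t ht⟩
  have hle (t : Triple m n d) (_ : t ∈ feasibleSet τ κ1 κ2) :
      relaxedObj f lam beta θ r s t ≤ sparseObj f lam beta t :=
    relaxedObj_le_sparseObj hθ0 hθ01 hθ1 hlam hbeta hrpos hspos t
  have heq (t) (ht : t ∈ globMin (relaxedObj f lam beta θ r s) (feasibleSet τ κ1 κ2)) :
      sparseObj f lam beta t = relaxedObj f lam beta θ r s t :=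
    (relaxedObj_eq_sparseObj hθ0 hθ1 hlam hbeta hrpos hspos (hC2 t ht)).symm
  have hG := globMin_eq_of_le_of_eq_on_globMin hle heq hne
  exact ⟨hG, optVal_eq_of_le_of_eq_on_globMin hle heq hne, hG ▸ hC, hC⟩

/-- Under the block Lipschitz condition and the stated bounds on `r`,`s`, if the minimum of
(FR) is attained then `𝒢_(FB) = 𝒢_(FR)`, `V_(FB) = V_(FR)`, and every global minimizer of
(FB) and of (FR) satisfies properties (C1) and (C2). -/
theorem stmt9 (m n d : ℕ) (hm : 0 < m) (hn : 0 < n) (hd : 0 < d)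
    (lam beta : ℝ) (hlam : 0 ≤ lam) (hbeta : 0 ≤ beta)
    (f : Matrix (Fin m) (Fin n) ℝ → Matrix (Fin m) (Fin n) ℝ → ℝ)
    (hf0 : ∀ Z S, 0 ≤ f Z S)
    (hfLip : LocallyLipschitz fun p : Matrix (Fin m) (Fin n) ℝ × Matrix (Fin m) (Fin n) ℝ =>
      f p.1 p.2)
    (κ1 κ2 : Fin m → Fin n → EReal)
    (hκ1 : ∀ i j, κ1 i j ≤ 0) (hκ2 : ∀ i j, 0 ≤ κ2 i j)
    (BS : Set (Matrix (Fin m) (Fin n) ℝ))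
    (hBS : BS = {S | ∀ i j, κ1 i j ≤ (S i j : EReal) ∧ (S i j : EReal) ≤ κ2 i j})
    (τ : ℝ≥0∞)
    (BX : Set (Matrix (Fin m) (Fin d) ℝ))
    (hBX : BX = {X | ∀ i, ENNReal.ofReal (colNorm X i) ≤ τ})
    (BY : Set (Matrix (Fin n) (Fin d) ℝ))
    (hBY : BY = {Y | ∀ i, ENNReal.ofReal (colNorm Y i) ≤ τ})
    (feasFB : Set (Matrix (Fin m) (Fin d) ℝ × Matrix (Fin n) (Fin d) ℝ × Matrix (Fin m) (Fin n) ℝ))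
    (hfeasFB : feasFB = {t | t.1 ∈ BX ∧ t.2.1 ∈ BY ∧ t.2.2 ∈ BS})
    (FF : Matrix (Fin m) (Fin d) ℝ × Matrix (Fin n) (Fin d) ℝ × Matrix (Fin m) (Fin n) ℝ → ℝ)
    (hFF : FF = fun t => f (t.1 * t.2.1ᵀ) t.2.2 +
      lam * ((nnzc t.1 : ℝ) + (nnzc t.2.1 : ℝ)) + beta * (l0 t.2.2 : ℝ))
    -- the relaxation function θ
    (θ : ℝ → ℝ) (hθ0 : θ 0 = 0) (hθnn : ∀ t, 0 ≤ t → 0 ≤ θ t)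
    (hθ01 : ∀ t, 0 < t → t < 1 → θ t ≤ 1) (hθ1 : ∀ t, 1 ≤ t → θ t = 1)
    -- block Lipschitz condition on f over 𝓑
    (LX LY LS : ℝ) (hLX : 0 < LX) (hLY : 0 < LY) (hLS : 0 < LS)
    (hLipX : 0 < lam → ∀ (X X' : Matrix (Fin m) (Fin d) ℝ) (Y : Matrix (Fin n) (Fin d) ℝ)
      (S : Matrix (Fin m) (Fin n) ℝ) (k : Fin d), (X, Y, S) ∈ feasFB → (X', Y, S) ∈ feasFB →
      (∀ i, i ≠ k → ∀ j, X j i = X' j i) →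
      |f (X * Yᵀ) S - f (X' * Yᵀ) S| ≤ LX * colNorm (X - X') k)
    (hLipY : 0 < lam → ∀ (X : Matrix (Fin m) (Fin d) ℝ) (Y Y' : Matrix (Fin n) (Fin d) ℝ)
      (S : Matrix (Fin m) (Fin n) ℝ) (k : Fin d), (X, Y, S) ∈ feasFB → (X, Y', S) ∈ feasFB →
      (∀ i, i ≠ k → ∀ j, Y j i = Y' j i) →
      |f (X * Yᵀ) S - f (X * Y'ᵀ) S| ≤ LY * colNorm (Y - Y') k)
    (hLipS : 0 < beta → ∀ (X : Matrix (Fin m) (Fin d) ℝ) (Y : Matrix (Fin n) (Fin d) ℝ)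
      (S S' : Matrix (Fin m) (Fin n) ℝ) (i : Fin m) (j : Fin n),
      (X, Y, S) ∈ feasFB → (X, Y, S') ∈ feasFB →
      (∀ i' j', (i', j') ≠ (i, j) → S i' j' = S' i' j') →
      |f (X * Yᵀ) S - f (X * Yᵀ) S'| ≤ LS * |S i j - S' i j|)
    -- η > 0 with θ(t) ≥ η·t on (0,1)
    (η : ℝ) (hη : 0 < η) (hθη : ∀ t, 0 < t → t < 1 → η * t ≤ θ t)
    -- parameters r, s and the bounds on them
    (r s : ℝ)
    (hrpos : 0 < lam → 0 < r)
    (hrτ : 0 < lam → ENNReal.ofReal r < τ)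
    (hrb : 0 < lam → r < lam * η / max LX LY)
    (hspos : 0 < beta → 0 < s)
    (hsb : 0 < beta → s < beta * η / LS)
    -- the relaxed objective
    (FR : Matrix (Fin m) (Fin d) ℝ × Matrix (Fin n) (Fin d) ℝ × Matrix (Fin m) (Fin n) ℝ → ℝ)
    (hFR : FR = fun t => f (t.1 * t.2.1ᵀ) t.2.2 +
      lam * ((∑ i, θ (colNorm t.1 i / r)) + ∑ i, θ (colNorm t.2.1 i / r)) +
      beta * ∑ i, ∑ j, θ (|t.2.2 i j| / s))
    -- the minimum of (FR) is attained
    (hne : (globMin FR feasFB).Nonempty) :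
    globMin FF feasFB = globMin FR feasFB ∧ optVal FF feasFB = optVal FR feasFB ∧
    (∀ t ∈ globMin FF feasFB, propC1 lam t ∧ propC2 lam beta r s t) ∧
    (∀ t ∈ globMin FR feasFB, propC1 lam t ∧ propC2 lam beta r s t) :=
  stmt9_general m n d lam beta hlam hbeta f κ1 κ2 hκ1 hκ2 BS hBS τ BX hBX BY hBY feasFB hfeasFB FF
    hFF θ hθ0 hθ01 hθ1 LX LY LS hLX hLS hLipX hLipY hLipS η hη hθη r s hrpos hrb hspos hsb FR hFR
    hne
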